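/- arXiv:1502.07730 — 2 statements merged into one kernel-verified Lean document; each statement's English description precedes it below -/
import Mathlib

section
/- Let n be a positive integer and let w_1 ≤ w_2 ≤ … ≤ w_m be a weighing sequence for n, with partial sums R_i = w_1 + … + w_i. Then for every i with 1 ≤ i ≤ m, one has 2·R_i ≥ 3·w_i − 1 (equivalently R_i ≥ (3w_i − 1)/2). -/
/-!
Let `R` be the sum of the weights before `w_i` and `W` the sum of `w_i, …, w_m`, so `n = R + W`.
If `w_i ≥ 2R + 2`, the integer `W - R - 1` admits no signed representation: the weights
before `w_i` contribute at most `R` in absolute value, while the tail contributes either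
exactly `W` (all signs `+1`, leaving `-R - 1` for the head) or at most `W - w_i`
(leaving at least `w_i - R - 1 ≥ R + 1`).
-/

/-- `w 0, w 1, …, w (m-1)` (1-indexed as `w_1 ≤ … ≤ w_m` in the paper) is a
weighing sequence for `n`: a nondecreasing list of `m` positive integers summing
to `n` such that every integer `1 ≤ k ≤ n` can be written as
`k = u_1 w_1 + … + u_m w_m` with each `u_i ∈ {-1, 0, 1}`. -/
def IsWeighingSeq (n m : ℕ) (w : ℕ → ℕ) : Prop :=
  (∀ i, i < m → 0 < w i) ∧
  (∀ i j, i ≤ j → j < m → w i ≤ w j) ∧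
  (∑ i ∈ Finset.range m, w i) = n ∧
  ∀ k : ℤ, 1 ≤ k → k ≤ (n : ℤ) →
    ∃ u : ℕ → ℤ, (∀ i, u i = -1 ∨ u i = 0 ∨ u i = 1) ∧
      k = ∑ i ∈ Finset.range m, u i * (w i : ℤ)

open Finset

lemma abs_sum_mul_le_sum {ι R : Type*} [Ring R] [LinearOrder R] [IsStrictOrderedRing R]
    (s : Finset ι) (u w : ι → R) (hu : ∀ j ∈ s, |u j| ≤ 1) (hw : ∀ j ∈ s, 0 ≤ w j) :
    |∑ j ∈ s, u j * w j| ≤ ∑ j ∈ s, w j := by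
  refine (abs_sum_le_sum_abs _ _).trans (sum_le_sum fun j hj => ?_)
  rw [abs_mul, abs_of_nonneg (hw j hj)]
  exact mul_le_of_le_one_left (hw j hj) (hu j hj)

lemma sum_mul_eq_sum_or_le_sub {ι : Type*} (s : Finset ι) (u w : ι → ℤ) {c : ℤ}
    (hu : ∀ j ∈ s, u j ≤ 1) (hc : ∀ j ∈ s, c ≤ w j) (hc0 : 0 ≤ c) :
    ∑ j ∈ s, u j * w j = ∑ j ∈ s, w j ∨ ∑ j ∈ s, u j * w j ≤ ∑ j ∈ s, w j - c := by
  by_cases hall : ∀ j ∈ s, u j = 1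
  · exact Or.inl (sum_congr rfl fun j hj => by rw [hall j hj, one_mul])
  push Not at hall
  obtain ⟨j₀, hj₀, hne⟩ := hall
  have hw₀ : c ≤ w j₀ := hc j₀ hj₀
  have hloss : c ≤ ∑ j ∈ s, (1 - u j) * w j := by
    have hnonneg : ∀ j ∈ s, 0 ≤ (1 - u j) * w j := fun j hj =>
      mul_nonneg (by linarith [hu j hj]) (hc0.trans (hc j hj))
    calc c ≤ (1 - u j₀) * w j₀ :=
          hw₀.trans (le_mul_of_one_le_left (hc0.trans hw₀) (by have := hu j₀ hj₀; omega))
      _ ≤ ∑ j ∈ s, (1 - u j) * w j := single_le_sum hnonneg hj₀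
  have hsplit : ∑ j ∈ s, (1 - u j) * w j = ∑ j ∈ s, w j - ∑ j ∈ s, u j * w j := by
    rw [← sum_sub_distrib]; exact sum_congr rfl fun j _ => by ring
  exact Or.inr (by linarith)

theorem two_mul_partial_sum_ge_general (n m : ℕ) (w : ℕ → ℕ)
    (hw : IsWeighingSeq n m w) (i : ℕ) (hi : i < m) :
    2 * ((∑ j ∈ Finset.range (i + 1), w j : ℕ) : ℤ) ≥ 3 * (w i : ℤ) - 1 := by
  obtain ⟨-, hmono, hsum, hrep⟩ := hw
  set R : ℤ := ∑ j ∈ range i, (w j : ℤ)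
  set W : ℤ := ∑ j ∈ Ico i m, (w j : ℤ)
  have hRW : (n : ℤ) = R + W := by
    rw [← hsum, Nat.cast_sum, ← sum_range_add_sum_Ico _ hi.le]
  have hR : (0 : ℤ) ≤ R := sum_nonneg fun j _ => by positivity
  have hwW : (w i : ℤ) ≤ W :=
    single_le_sum (f := fun j => (w j : ℤ)) (fun j _ => by positivity) (by simp [hi])
  rw [Nat.cast_sum, sum_range_succ]
  by_contra! hcon
  obtain ⟨u, hu, hk⟩ := hrep (W - R - 1) (by linarith) (by linarith)
  rw [← sum_range_add_sum_Ico _ hi.le] at hk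
  have hsign : ∀ j, |u j| ≤ 1 := fun j => by rcases hu j with h | h | h <;> simp [h]
  have hhead := abs_le.mp <| abs_sum_mul_le_sum (range i) u (fun j => (w j : ℤ))
    (fun j _ => hsign j) (fun j _ => by positivity)
  rcases sum_mul_eq_sum_or_le_sub (Ico i m) u (fun j => (w j : ℤ)) (c := w i)
    (fun j _ => (abs_le.mp (hsign j)).2)
    (fun j hj => by exact_mod_cast hmono i j (mem_Ico.mp hj).1 (mem_Ico.mp hj).2)
    (by positivity) with htail | htail <;> linarith [hhead.1, hhead.2]

/-- For any weighing sequence, `2 * R_i ≥ 3 * w_i - 1` where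
`R_i = w_1 + … + w_i` (here `i` is 0-indexed, so `R_i` is the sum over
`Finset.range (i+1)`). -/
theorem two_mul_partial_sum_ge (n m : ℕ) (w : ℕ → ℕ)
    (hn : 0 < n) (hw : IsWeighingSeq n m w) (i : ℕ) (hi : i < m) :
    2 * ((∑ j ∈ Finset.range (i + 1), w j : ℕ) : ℤ) ≥ 3 * (w i : ℤ) - 1 :=
  two_mul_partial_sum_ge_general n m w hw i hi
end

section
/- Let m be a positive integer and let n be an integer with (3^{m−1} + 1)/2 ≤ n ≤ (3^m − 1)/2. Then there exists a weighing sequence for n having exactly m parts; consequently the minimal length of a weighing sequence for n (the length of every feasible partition of n) equals m. -/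
open Finset

def IsSignedSum (w : ℕ → ℕ) (m : ℕ) (k : ℤ) : Prop :=
  ∃ u : ℕ → ℤ, (∀ i, u i = -1 ∨ u i = 0 ∨ u i = 1) ∧ k = ∑ i ∈ range m, u i * (w i : ℤ)

namespace IsSignedSum

variable {w : ℕ → ℕ} {m : ℕ} {k : ℤ}

theorem zero (w : ℕ → ℕ) (m : ℕ) : IsSignedSum w m 0 :=
  ⟨0, fun _ => Or.inr (Or.inl rfl), by simp⟩

theorem neg (h : IsSignedSum w m k) : IsSignedSum w m (-k) := by
  obtain ⟨u, hu, rfl⟩ := h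
  refine ⟨-u, fun i => ?_, by simp [sum_neg_distrib]⟩
  rcases hu i with h | h | h <;> simp [h]

theorem add_mul_succ (h : IsSignedSum w m k) {c : ℤ} (hc : c = -1 ∨ c = 0 ∨ c = 1) :
    IsSignedSum w (m + 1) (k + c * w m) := by
  obtain ⟨u, hu, rfl⟩ := h
  refine ⟨Function.update u m c, fun i => ?_, ?_⟩
  · rcases eq_or_ne i m with rfl | hi
    · simpa using hc
    · simpa [hi] using hu i
  · rw [sum_range_succ, Function.update_self]
    congr 1
    refine sum_congr rfl fun i hi => ?_
    rw [Function.update_of_ne (mem_range.1 hi).ne]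

theorem of_abs_le (hw : ∀ i < m, w i ≤ 2 * ∑ j ∈ range i, w j + 1)
    (hk : |k| ≤ ∑ i ∈ range m, (w i : ℤ)) : IsSignedSum w m k := by
  induction m generalizing k with
  | zero =>
    rw [sum_range_zero, abs_nonpos_iff] at hk
    exact hk ▸ zero w 0
  | succ m ih =>
    have hwm : (w m : ℤ) ≤ 2 * ∑ i ∈ range m, (w i : ℤ) + 1 := by
      exact_mod_cast hw m (lt_add_one m)
    set S := ∑ i ∈ range m, (w i : ℤ)
    rw [sum_range_succ, abs_le] at hk
    -- since `w m ≤ 2 S + 1`, one of `k - w m`, `k`, `k + w m` lies in `[-S, S]`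
    obtain ⟨c, hc, hkc⟩ : ∃ c : ℤ, (c = -1 ∨ c = 0 ∨ c = 1) ∧ |k - c * w m| ≤ S := by
      rcases lt_or_ge S k with hS | hS
      · exact ⟨1, by simp, abs_le.2 ⟨by linarith, by linarith⟩⟩
      rcases lt_or_ge k (-S) with hS' | hS'
      · exact ⟨-1, by simp, abs_le.2 ⟨by linarith, by linarith⟩⟩
      · exact ⟨0, by simp, abs_le.2 ⟨by linarith, by linarith⟩⟩
    simpa using (ih (fun i hi => hw i (by omega)) hkc).add_mul_succ hc

end IsSignedSum

theorem card_le_three_pow_of_isSignedSum {w : ℕ → ℕ} {m : ℕ} {S : Finset ℤ}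
    (hS : ∀ k ∈ S, IsSignedSum w m k) : #S ≤ 3 ^ m := by
  let T : Finset (Fin m → ℤ) := Fintype.piFinset fun _ => {-1, 0, 1}
  have hST : S ⊆ T.image fun u => ∑ i : Fin m, u i * (w i : ℤ) := by
    intro k hk
    obtain ⟨u, hu, rfl⟩ := hS k hk
    refine mem_image.2 ⟨fun i => u i, Fintype.mem_piFinset.2 fun i => ?_, ?_⟩
    · simpa using hu i
    · exact (sum_range fun i => u i * (w i : ℤ)).symm
  calc #S ≤ #(T.image _) := card_le_card hST
    _ ≤ #T := card_image_le
    _ = 3 ^ m := by simp [T]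

theorem IsWeighingSeq.two_mul_add_one_le_three_pow {n m : ℕ} {w : ℕ → ℕ}
    (h : IsWeighingSeq n m w) : 2 * n + 1 ≤ 3 ^ m := by
  have hS : ∀ k ∈ Icc (-(n : ℤ)) n, IsSignedSum w m k := by
    intro k hk
    rw [mem_Icc] at hk
    rcases lt_trichotomy k 0 with hk0 | rfl | hk0
    · simpa using IsSignedSum.neg (h.2.2.2 (-k) (by omega) (by omega))
    · exact IsSignedSum.zero w m
    · exact h.2.2.2 k hk0 hk.2
  have := card_le_three_pow_of_isSignedSum hS
  rw [Int.card_Icc] at this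
  omega

theorem isWeighingSeq_of_le_two_mul_sum_add_one {n m : ℕ} {w : ℕ → ℕ}
    (hpos : ∀ i < m, 0 < w i) (hmono : ∀ i j, i ≤ j → j < m → w i ≤ w j)
    (hsum : ∑ i ∈ range m, w i = n) (hw : ∀ i < m, w i ≤ 2 * ∑ j ∈ range i, w j + 1) :
    IsWeighingSeq n m w := by
  refine ⟨hpos, hmono, hsum, fun k hk1 hk2 => IsSignedSum.of_abs_le hw ?_⟩
  rw [← Nat.cast_sum, hsum, abs_le]
  omega

theorem isWeighingSeq_of_eq_succ_add_one_div_three {s : ℕ → ℕ} {m : ℕ} (hm : 0 < m)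
    (h1 : s 1 = 1) (hs : ∀ i < m, s i = (s (i + 1) + 1) / 3) :
    IsWeighingSeq (s m) m fun i => s (i + 1) - s i := by
  have hpos : ∀ i, 1 ≤ i → i ≤ m → 1 ≤ s i := by
    refine Nat.le_induction (by omega) fun i _ ih hi => ?_
    have := hs i (by omega)
    have := ih (by omega)
    omega
  have h0 : s 0 = 0 := by rw [hs 0 hm, h1]
  have hprefix : ∀ i ≤ m, ∑ j ∈ range i, (s (j + 1) - s j) = s i := by
    intro i hi
    induction i with
    | zero => rw [sum_range_zero, h0]
    | succ i ih =>
      have := hs i (by omega)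
      rw [sum_range_succ, ih (by omega)]
      omega
  refine isWeighingSeq_of_le_two_mul_sum_add_one (fun i hi => ?_) (fun i j hij hj => ?_)
    (hprefix m le_rfl) (fun i hi => ?_)
  · rcases i.eq_zero_or_pos with rfl | hi0
    · simp [h0, h1]
    · have := hs i hi
      have := hpos i hi0 hi.le
      omega
  · induction j, hij using Nat.le_induction with
    | base => exact le_rfl
    | succ j hij ih =>
      have := hs j (by omega)
      have := hs (j + 1) hj
      have := hpos (j + 1) (by omega) hj.le
      exact (ih (by omega)).trans (by omega)
  · have := hs i hi
    rw [hprefix i hi.le]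
    omega

/-- The integer nearest to `n / 3 ^ (m - i)`, halves rounded up. -/
def roundedPrefix (n m i : ℕ) : ℕ := (2 * n + 3 ^ (m - i)) / (2 * 3 ^ (m - i))

theorem roundedPrefix_self (n m : ℕ) : roundedPrefix n m m = n := by
  simp only [roundedPrefix, Nat.sub_self, pow_zero]
  omega

theorem roundedPrefix_one {n m : ℕ} (hm : 0 < m) (h1 : 3 ^ (m - 1) + 1 ≤ 2 * n)
    (h2 : 2 * n ≤ 3 ^ m - 1) : roundedPrefix n m 1 = 1 := by
  have h3 : 3 ^ m = 3 * 3 ^ (m - 1) := by rw [← pow_succ', Nat.sub_add_cancel hm]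
  unfold roundedPrefix
  exact Nat.div_eq_of_lt_le (by omega) (by omega)

theorem roundedPrefix_eq_succ_add_one_div_three (n : ℕ) {m i : ℕ} (hi : i < m) :
    roundedPrefix n m i = (roundedPrefix n m (i + 1) + 1) / 3 := by
  have hmi : m - i = m - (i + 1) + 1 := by omega
  have hd : 0 < 2 * 3 ^ (m - (i + 1)) := by positivity
  rw [roundedPrefix, roundedPrefix, hmi, ← Nat.add_div_right _ hd, Nat.div_div_eq_div_mul]
  congr 1 <;> ring

/-- If `(3^(m-1) + 1) / 2 ≤ n ≤ (3^m - 1) / 2` (stated doubled, exactly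
equivalently, as `3^(m-1) + 1 ≤ 2n ≤ 3^m - 1`), then there is a weighing
sequence for `n` with exactly `m` parts, and every weighing sequence for `n`
has at least `m` parts; hence the minimal length equals `m`. -/
theorem exists_length_m_and_min (m n : ℕ) (hm : 0 < m)
    (h1 : 3 ^ (m - 1) + 1 ≤ 2 * n) (h2 : 2 * n ≤ 3 ^ m - 1) :
    (∃ w : ℕ → ℕ, IsWeighingSeq n m w) ∧
      ∀ (m' : ℕ) (w : ℕ → ℕ), IsWeighingSeq n m' w → m ≤ m' := by
  have hweights := isWeighingSeq_of_eq_succ_add_one_div_three hm (roundedPrefix_one hm h1 h2)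
    fun i hi => roundedPrefix_eq_succ_add_one_div_three n hi
  rw [roundedPrefix_self] at hweights
  refine ⟨⟨_, hweights⟩, fun m' w hw => ?_⟩
  have hlt : 3 ^ (m - 1) < 3 ^ m' := by
    have := hw.two_mul_add_one_le_three_pow
    omega
  have := (Nat.pow_lt_pow_iff_right (by norm_num)).1 hlt
  omega
end
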